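/- arXiv:2507.01344 — 2 statements merged into one kernel-verified Lean document; each statement's English description precedes it below -/
import Mathlib

section
/- Let A be a nonnegative symmetric real n×n matrix. Then ρ_per(A) + η_per(A) = n. -/
/-- The permanent of a (possibly rectangular) matrix whose rows and columns are indexed by
finite types: the sum over all bijections `e : ι ≃ κ` of `∏ i, M i (e i)`.
For a square matrix this is the usual permanent `∑_{σ ∈ S_n} ∏_{i} M i (σ i)`. -/
noncomputable def Matrix.per {ι κ R : Type*} [Fintype ι] [Fintype κ] [DecidableEq ι]
    [DecidableEq κ] [CommSemiring R] (M : Matrix ι κ R) : R :=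
  ∑ e : ι ≃ κ, ∏ i, M i (e i)

/-- The permanental rank `ρ_per(A)` of an `n × n` matrix: the largest `k` such that some
`k × k` submatrix (rows chosen by an injection `f`, columns by an injection `g`) has
nonzero permanent. -/
noncomputable def permRank {n : ℕ} {R : Type*} [CommSemiring R]
    (A : Matrix (Fin n) (Fin n) R) : ℕ :=
  sSup {k | ∃ f g : Fin k → Fin n, Function.Injective f ∧ Function.Injective g ∧
    (A.submatrix f g).per ≠ 0}

/-- The permanental polynomial `π(A, x) = per(A - x I)`. -/
noncomputable def permPoly {n : ℕ} {R : Type*} [CommRing R]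
    (A : Matrix (Fin n) (Fin n) R) : Polynomial R :=
  (A.map Polynomial.C - (Polynomial.X : Polynomial R) • (1 : Matrix (Fin n) (Fin n) (Polynomial R))).per

/-- The permanental nullity `η_per(A)`: the multiplicity of `0` as a root of the
permanental polynomial. -/
noncomputable def permNullity {n : ℕ} {R : Type*} [CommRing R]
    (A : Matrix (Fin n) (Fin n) R) : ℕ :=
  (permPoly A).rootMultiplicity 0

/-!
Expanding `per (A - x I)` along the diagonal gives `π(A, x) = ∑_S (-x)^(n - |S|) per A[S, S]`.
For nonnegative `A` nothing cancels, so `η_per(A) = n - m`, where `m` is the largest size of a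
principal submatrix with nonzero permanent, and it remains to show `ρ_per(A) = m`.
A nonzero `k × k` permanent gives an injection `σ` of a `k`-set `I` with `A i (σ i) > 0`.
If some `i ∈ I` is not in `σ '' I`, symmetry turns `{i, σ i}` into a transposition with positive
entries and we recurse on `I \ {i, σ i}`; otherwise `σ` permutes `I`. Either way we obtain a
permutation supported on at least `k` indices with positive entries along it, i.e. a principal
submatrix of size `≥ k` with nonzero permanent.
-/

open Finset Polynomial Equiv Function

theorem exists_perm_of_injOn {α : Type*} [DecidableEq α] {r : α → α → Prop}
    (hr : Std.Symm r) {σ : α → α} (I : Finset α) (hσ : Set.InjOn σ I)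
    (hrσ : ∀ i ∈ I, r i (σ i)) :
    ∃ (S : Finset α) (τ : Perm α), #I ≤ #S ∧ S ⊆ I ∪ I.image σ ∧
      (∀ s ∈ S, r s (τ s)) ∧ ∀ s ∉ S, τ s = s := by
  induction I using Finset.strongInduction with
  | H I ih =>
  by_cases hsub : I ⊆ I.image σ
  · have himage : I.image σ = I :=
      (eq_of_subset_of_card_le hsub (card_image_of_injOn hσ).le).symm
    have hbij : Set.BijOn σ I I := by simpa [← coe_image, himage] using hσ.bijOn_image
    refine ⟨I, Perm.ofSubtype (hbij.equiv σ), le_rfl, subset_union_left, fun s hs => ?_,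
      fun s hs => Perm.ofSubtype_apply_of_not_mem _ hs⟩
    rw [Perm.ofSubtype_apply_of_mem _ hs]
    exact hrσ s hs
  · obtain ⟨i₀, hi₀, hi₀σ⟩ := not_subset.1 hsub
    set i₁ := σ i₀
    have hi₁ : i₁ ∈ I.image σ := mem_image_of_mem σ hi₀
    have hne : i₀ ≠ i₁ := fun h => hi₀σ (h ▸ hi₁)
    set I' := (I.erase i₀).erase i₁
    have hI' : I' ⊂ I := (erase_subset _ _).trans_ssubset (erase_ssubset hi₀)
    obtain ⟨S', τ', hcard, hS', hr', hfix'⟩ :=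
      ih I' hI' (hσ.mono (coe_subset.2 hI'.subset)) fun i hi => hrσ i (hI'.subset hi)
    -- the invariant `S ⊆ I ∪ σ '' I` keeps `i₀` and `σ i₀` out of the recursive cover
    have h₀ : i₀ ∉ S' := fun h => by
      rcases mem_union.1 (hS' h) with h | h
      · simp [I'] at h
      · exact hi₀σ (image_subset_image hI'.subset h)
    have h₁ : i₁ ∉ S' := fun h => by
      rcases mem_union.1 (hS' h) with h | h
      · simp [I'] at h
      · obtain ⟨j, hj, hσj⟩ := mem_image.1 h
        have : j = i₀ := hσ (hI'.subset hj) hi₀ hσj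
        simp [I', this] at hj
    refine ⟨insert i₀ (insert i₁ S'), τ' * swap i₀ i₁, ?_, ?_, ?_, ?_⟩
    · have : #I ≤ #I' + 2 := by
        have h₀ : #(I.erase i₀) = #I - 1 := card_erase_of_mem hi₀
        have h₁ : #(I.erase i₀) - 1 ≤ #I' := pred_card_le_card_erase
        omega
      rw [card_insert_of_notMem (by simp [hne, h₀]), card_insert_of_notMem h₁]
      omega
    · refine insert_subset (mem_union_left _ hi₀) (insert_subset (mem_union_right _ hi₁) ?_)
      exact hS'.trans (union_subset_union hI'.subset (image_subset_image hI'.subset))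
    · intro s hs
      rcases mem_insert.1 hs with rfl | hs
      · simpa [hfix' _ h₁] using hrσ s hi₀
      rcases mem_insert.1 hs with rfl | hs
      · simpa [hfix' _ h₀] using hr.symm _ _ (hrσ i₀ hi₀)
      · have : swap i₀ i₁ s = s :=
          swap_apply_of_ne_of_ne (ne_of_mem_of_not_mem hs h₀) (ne_of_mem_of_not_mem hs h₁)
        simpa [this] using hr' s hs
    · intro s hs
      simp only [mem_insert, not_or] at hs
      simp [swap_apply_of_ne_of_ne hs.1 hs.2.1, hfix' s hs.2.2]

theorem exists_perm_of_injective {ι α : Type*} [Fintype ι] [DecidableEq α]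
    {r : α → α → Prop} (hr : Std.Symm r) {f g : ι → α} (hf : Injective f)
    (hg : Injective g) (hfg : ∀ i, r (f i) (g i)) :
    ∃ (S : Finset α) (τ : Perm α), Fintype.card ι ≤ #S ∧ (∀ s ∈ S, r s (τ s)) ∧
      ∀ s ∉ S, τ s = s := by
  have hinj : Set.InjOn (extend f g id) (univ.map ⟨f, hf⟩ : Finset α) := by
    rintro _ hx _ hy hxy
    obtain ⟨i, -, rfl⟩ := mem_map.1 hx
    obtain ⟨j, -, rfl⟩ := mem_map.1 hy
    simp only [Embedding.coeFn_mk, hf.extend_apply] at hxy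
    rw [hg hxy]
  obtain ⟨S, τ, hcard, -, hrτ, hfix⟩ :=
    exists_perm_of_injOn hr _ hinj (by simpa [hf.extend_apply] using hfg)
  exact ⟨S, τ, by simpa using hcard, hrτ, hfix⟩

namespace Matrix

variable {ι κ R : Type*} [DecidableEq ι] [DecidableEq κ] [CommSemiring R]

section Fintype

variable [Fintype ι] [Fintype κ]

lemma per_submatrix_equiv {ι' κ' : Type*} [Fintype ι'] [Fintype κ'] [DecidableEq ι']
    [DecidableEq κ'] (M : Matrix ι κ R) (e : ι' ≃ ι) (f : κ' ≃ κ) :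
    (M.submatrix e f).per = M.per := by
  refine Fintype.sum_equiv (e.equivCongr f) _ _ fun σ => ?_
  rw [← e.prod_comp]
  simp [Equiv.equivCongr]

lemma _root_.RingHom.map_per {S : Type*} [CommSemiring S] (φ : R →+* S) (M : Matrix ι κ R) :
    φ M.per = (M.map φ).per := by
  simp [per, map_sum, map_prod]

lemma per_nonneg [PartialOrder R] [IsOrderedRing R] {M : Matrix ι κ R}
    (hM : ∀ i j, 0 ≤ M i j) : 0 ≤ M.per :=
  sum_nonneg fun e _ => prod_nonneg fun i _ => hM i (e i)

lemma per_ne_zero_iff_of_nonneg [LinearOrder R] [IsStrictOrderedRing R] {M : Matrix ι κ R}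
    (hM : ∀ i j, 0 ≤ M i j) : M.per ≠ 0 ↔ ∃ e : ι ≃ κ, ∀ i, 0 < M i (e i) := by
  have hterm (e : ι ≃ κ) : 0 ≤ ∏ i, M i (e i) := prod_nonneg fun i _ => hM i (e i)
  rw [per, Ne, sum_eq_zero_iff_of_nonneg fun e _ => hterm e]
  simp only [mem_univ, true_implies, not_forall]
  refine exists_congr fun e => ⟨fun h i => (hM i (e i)).lt_of_ne' fun h0 => h ?_,
    fun h => (prod_pos fun i _ => h i).ne'⟩
  exact prod_eq_zero (mem_univ i) h0

end Fintype

noncomputable def principalPer (M : Matrix ι ι R) (s : Finset ι) : R :=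
  (M.submatrix (fun i : s => (i : ι)) (fun i : s => (i : ι))).per

lemma principalPer_empty (M : Matrix ι ι R) : M.principalPer ∅ = 1 := by
  simp [principalPer, per]

lemma principalPer_map {S : Type*} [CommSemiring S] (φ : R →+* S) (M : Matrix ι ι R)
    (s : Finset ι) : (M.map φ).principalPer s = φ (M.principalPer s) :=
  (φ.map_per (M.submatrix _ _)).symm

lemma principalPer_nonneg [PartialOrder R] [IsOrderedRing R] {A : Matrix ι ι R}
    (hA : ∀ i j, 0 ≤ A i j) (s : Finset ι) : 0 ≤ A.principalPer s :=
  per_nonneg fun _ _ => hA _ _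

lemma principalPer_ne_zero_of_perm [LinearOrder R] [IsStrictOrderedRing R] {A : Matrix ι ι R}
    (hA : ∀ i j, 0 ≤ A i j) {s : Finset ι} (τ : Perm ι) (hpos : ∀ i ∈ s, 0 < A i (τ i))
    (hfix : ∀ i ∉ s, τ i = i) : A.principalPer s ≠ 0 :=
  (per_ne_zero_iff_of_nonneg fun _ _ => hA _ _).2
    ⟨(Perm.subtypeEquivSubtypePerm (· ∈ s)).symm ⟨τ, hfix⟩,
      fun i => by simpa using hpos i i.2⟩

lemma exists_principalPer_ne_zero_of_per_submatrix_ne_zero [LinearOrder R]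
    [IsStrictOrderedRing R] {A : Matrix ι ι R} (hA : ∀ i j, 0 ≤ A i j) (hsym : A.IsSymm)
    {f g : κ → ι} [Fintype κ] (hf : Injective f) (hg : Injective g)
    (hper : (A.submatrix f g).per ≠ 0) :
    ∃ s : Finset ι, Fintype.card κ ≤ #s ∧ A.principalPer s ≠ 0 := by
  obtain ⟨e, he⟩ := (per_ne_zero_iff_of_nonneg fun _ _ => hA _ _).1 hper
  obtain ⟨s, τ, hcard, hpos, hfix⟩ := exists_perm_of_injective (r := fun i j => 0 < A i j)
    ⟨fun i j h => (hsym.apply i j).symm ▸ h⟩ hf (hg.comp e.injective) he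
  exact ⟨s, hcard, principalPer_ne_zero_of_perm hA τ hpos hfix⟩

lemma prod_diagonal_apply (d : ι → R) (σ : Perm ι) (t : Finset ι) :
    ∏ i ∈ t, diagonal d i (σ i) = if ∀ i ∈ t, σ i = i then ∏ i ∈ t, d i else 0 := by
  split_ifs with h
  · exact prod_congr rfl fun i hi => by rw [h i hi, diagonal_apply_eq]
  · push Not at h
    obtain ⟨i, hi, hσi⟩ := h
    exact prod_eq_zero hi (diagonal_apply_ne _ hσi.symm)

variable [Fintype ι]

lemma principalPer_eq_sum (M : Matrix ι ι R) (s : Finset ι) :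
    M.principalPer s = ∑ σ : Perm ι with ∀ i ∉ s, σ i = i, ∏ i ∈ s, M i (σ i) := by
  rw [sum_subtype _ (p := fun σ : Perm ι => ∀ i, i ∉ s → σ i = i) (fun σ => by simp),
    principalPer, per, ← (Perm.subtypeEquivSubtypePerm (· ∈ s)).sum_comp]
  refine sum_congr rfl fun τ _ => ?_
  rw [← prod_coe_sort s]
  exact prod_congr rfl fun i _ => by simp [Perm.subtypeEquivSubtypePerm]

lemma per_add_diagonal (M : Matrix ι ι R) (d : ι → R) :
    (M + diagonal d).per = ∑ s : Finset ι, (∏ i ∈ sᶜ, d i) * M.principalPer s := by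
  simp only [per, add_apply, prod_add, ← powerset_univ]
  rw [sum_comm]
  refine sum_congr rfl fun s _ => ?_
  simp only [← compl_eq_univ_sdiff, prod_diagonal_apply, principalPer_eq_sum, mul_sum,
    sum_filter]
  refine sum_congr rfl fun σ _ => ?_
  simp only [mem_compl]
  split_ifs <;> ring

end Matrix

open Matrix

section PermPoly

variable {n : ℕ}

lemma permPoly_eq_sum {R : Type*} [CommRing R] (A : Matrix (Fin n) (Fin n) R) :
    permPoly A = ∑ s : Finset (Fin n), (-X) ^ #sᶜ * C (A.principalPer s) := by
  have : A.map C - (X : R[X]) • (1 : Matrix (Fin n) (Fin n) R[X]) =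
      A.map C + diagonal fun _ => -X := by
    rw [sub_eq_add_neg, smul_one_eq_diagonal, diagonal_neg]
  simp [permPoly, this, per_add_diagonal, principalPer_map]

lemma coeff_permPoly {R : Type*} [CommRing R] (A : Matrix (Fin n) (Fin n) R) (k : ℕ) :
    (permPoly A).coeff k = (-1) ^ k * ∑ s : Finset (Fin n) with #sᶜ = k, A.principalPer s := by
  have hterm (s : Finset (Fin n)) : ((-X) ^ #sᶜ * C (A.principalPer s)).coeff k =
      if #sᶜ = k then (-1) ^ k * A.principalPer s else 0 := by
    rw [show (-X) ^ #sᶜ * C (A.principalPer s) =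
        C ((-1) ^ #sᶜ * A.principalPer s) * X ^ #sᶜ by
      rw [neg_pow, C_mul, C_pow, C_neg, C_1]; ring, coeff_C_mul_X_pow]
    obtain rfl | h := eq_or_ne #sᶜ k
    · simp
    · simp [h, h.symm]
  simp only [permPoly_eq_sum, finsetSum_coeff, hterm, mul_sum, sum_filter, mul_ite, mul_zero]

variable {R : Type*} [CommRing R] [LinearOrder R] [IsStrictOrderedRing R]
  {A : Matrix (Fin n) (Fin n) R} {T : Finset (Fin n)}

lemma coeff_permPoly_ne_zero_iff (hA : ∀ i j, 0 ≤ A i j) (k : ℕ) :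
    (permPoly A).coeff k ≠ 0 ↔ ∃ s, #sᶜ = k ∧ A.principalPer s ≠ 0 := by
  rw [coeff_permPoly, mul_ne_zero_iff, and_iff_right ((isUnit_neg_one.pow k).ne_zero), Ne,
    sum_eq_zero_iff_of_nonneg fun s _ => principalPer_nonneg hA s]
  simp

lemma permNullity_eq (hA : ∀ i j, 0 ≤ A i j) (hT : A.principalPer T ≠ 0)
    (hmax : ∀ s, A.principalPer s ≠ 0 → #s ≤ #T) : permNullity A = n - #T := by
  have hcoeff : (permPoly A).coeff (n - #T) ≠ 0 :=
    (coeff_permPoly_ne_zero_iff hA _).2 ⟨T, by simp [card_compl], hT⟩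
  rw [permNullity, rootMultiplicity_eq_natTrailingDegree']
  refine (natTrailingDegree_le_of_ne_zero hcoeff).antisymm
    (le_natTrailingDegree (fun h => hcoeff (by simp [h])) fun k hk => ?_)
  by_contra h
  obtain ⟨s, hs, hs0⟩ := (coeff_permPoly_ne_zero_iff hA k).1 h
  have := hmax s hs0
  rw [card_compl, Fintype.card_fin] at hs
  omega

lemma permRank_eq (hA : ∀ i j, 0 ≤ A i j) (hsym : A.IsSymm) (hT : A.principalPer T ≠ 0)
    (hmax : ∀ s, A.principalPer s ≠ 0 → #s ≤ #T) : permRank A = #T := by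
  refine IsGreatest.csSup_eq ⟨?_, ?_⟩
  · let e := T.orderIsoOfFin rfl
    have he : Injective fun i => (e i : Fin n) := fun i j h => e.injective (Subtype.ext h)
    rw [principalPer, ← per_submatrix_equiv _ e.toEquiv e.toEquiv] at hT
    exact ⟨_, _, he, he, hT⟩
  · rintro k ⟨f, g, hf, hg, hper⟩
    obtain ⟨s, hk, hs⟩ :=
      exists_principalPer_ne_zero_of_per_submatrix_ne_zero hA hsym hf hg hper
    simpa using hk.trans (hmax s hs)

end PermPoly

/-- For a nonnegative symmetric real `n × n` matrix `A`,
`ρ_per(A) + η_per(A) = n`. -/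
theorem perm_rank_add_nullity_of_nonneg_symm {n : ℕ} (A : Matrix (Fin n) (Fin n) ℝ)
    (hnonneg : ∀ i j, 0 ≤ A i j) (hsym : A.IsSymm) :
    permRank A + permNullity A = n := by
  obtain ⟨T, hT, hmax⟩ := exists_max_image {s : Finset (Fin n) | A.principalPer s ≠ 0} card
    ⟨∅, by simp [principalPer_empty]⟩
  simp only [mem_filter, mem_univ, true_and] at hT hmax
  rw [permRank_eq hnonneg hsym hT hmax, permNullity_eq hnonneg hT hmax]
  have := card_le_univ T
  simp only [Fintype.card_fin] at this
  omega
end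

section
/- Let A be a positive semi-definite real symmetric n×n matrix. Then per(A) ≥ ∏_{i=1}^{n} a_{ii} ≥ 0; moreover a_{ii} a_{jj} ≥ a_{ij}^2 for all i, j, and every principal submatrix A[S,S] is positive semi-definite, so per(A[S,S]) ≥ 0 for all S ⊆ [n]. -/
/-- The principal submatrix `A[S, S]` of `A`, with rows and columns indexed by `S`. -/
noncomputable def principalSub {n : ℕ} {R : Type*} (A : Matrix (Fin n) (Fin n) R)
    (S : Finset (Fin n)) : Matrix S S R :=
  A.submatrix Subtype.val Subtype.val

/-!
Write `A = B Bᵀ`, so `a_ij = ⟨b_i, b_j⟩` for the rows `b_i` of `B`, and let `S = Σ_σ σ` be the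
symmetrizer on `V^{⊗n}`. Expanding `‖S(b_1 ⊗ ⋯ ⊗ b_n)‖²` gives `n! · per A`. Splitting `S` along
the cosets of the stabilizer of the first slot, `S(b_1 ⊗ w) = Σ_p (1 p) y` with `y = b_1 ⊗ S'w`.
Since `y` is fixed by the permutations fixing slot `1`, every cross term `⟨(1 p) y, (1 q) y⟩`
equals some `⟨y, (1 r) y⟩`, which is a sum of squares. Dropping the cross terms,
`(n+1)! · per A ≥ (n+1) ‖y‖² = (n+1)! · a_11 · per A(1|1)`, and induction gives `per A ≥ ∏ a_ii`.
-/

open Matrix Equiv Finset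

theorem Equiv.Perm.decomposeFin_symm_eq_swap_mul {n : ℕ} (p : Fin (n + 1)) (e : Perm (Fin n)) :
    Perm.decomposeFin.symm (p, e) = swap 0 p * Perm.decomposeFin.symm (0, e) := by
  ext i
  cases i using Fin.cases <;> simp

theorem Fin.sum_pi_cons {α M : Type*} [Fintype α] [AddCommMonoid M] {n : ℕ}
    (F : (Fin (n + 1) → α) → M) : ∑ f, F f = ∑ a, ∑ g : Fin n → α, F (Fin.cons a g) := by
  rw [← (Fin.consEquiv fun _ => α).sum_comp, Fintype.sum_prod_type]
  rfl

theorem Fin.sum_pi_insertNth {α M : Type*} [Fintype α] [AddCommMonoid M] {n : ℕ}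
    (p : Fin (n + 1)) (F : (Fin (n + 1) → α) → M) :
    ∑ f, F f = ∑ a, ∑ g : Fin n → α, F (p.insertNth a g) := by
  rw [← (Fin.insertNthEquiv (fun _ => α) p).sum_comp, Fintype.sum_prod_type]
  rfl

theorem Matrix.mul_transpose_apply {ι α R : Type*} [Fintype α] [CommSemiring R]
    (B : Matrix ι α R) (i j : ι) : (B * Bᵀ) i j = B i ⬝ᵥ B j := rfl

theorem Matrix.mul_transpose_apply_sq_le {ι α R : Type*} [Fintype α] [CommRing R] [LinearOrder R]
    [IsStrictOrderedRing R] (B : Matrix ι α R) (i j : ι) :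
    (B * Bᵀ) i j ^ 2 ≤ (B * Bᵀ) i i * (B * Bᵀ) j j := by
  simpa only [mul_transpose_apply, dotProduct, sq] using
    sum_mul_sq_le_sq_mul_sq univ (B i) (B j)

theorem Matrix.per_submatrix_equiv_s17 {ι κ ι' κ' R : Type*} [Fintype ι] [Fintype κ] [DecidableEq ι]
    [DecidableEq κ] [Fintype ι'] [Fintype κ'] [DecidableEq ι'] [DecidableEq κ']
    [CommSemiring R] (M : Matrix ι κ R) (e₁ : ι' ≃ ι) (e₂ : κ' ≃ κ) :
    (M.submatrix e₁ e₂).per = M.per := by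
  refine Fintype.sum_equiv (e₁.equivCongr e₂) _ _ fun π => ?_
  simpa using e₁.prod_comp fun i => M i (e₂ (π (e₁.symm i)))

/-! A function `(ι → α) → R` is the coordinate array of a tensor in `(R^α)^{⊗ι}`, one slot per
element of `ι`; `⬝ᵥ` is then the inner product of tensors. -/
namespace SlotTensor

variable {ι α R : Type*}

def permuteSlots (σ : Perm ι) (F : (ι → α) → R) : (ι → α) → R := fun f => F (f ∘ σ)

theorem permuteSlots_one (F : (ι → α) → R) : permuteSlots 1 F = F := rfl

theorem permuteSlots_mul (σ τ : Perm ι) (F : (ι → α) → R) :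
    permuteSlots (σ * τ) F = permuteSlots σ (permuteSlots τ F) := rfl

theorem permuteSlots_sum {κ : Type*} [AddCommMonoid R] (σ : Perm ι) (s : Finset κ)
    (F : κ → (ι → α) → R) : permuteSlots σ (∑ k ∈ s, F k) = ∑ k ∈ s, permuteSlots σ (F k) := by
  ext f
  simp only [permuteSlots, Finset.sum_apply]

section Fintype

variable [Fintype ι]

def pureTensor [CommMonoid R] (B : Matrix ι α R) : (ι → α) → R := fun f => ∏ i, B i (f i)

theorem permuteSlots_pureTensor [CommMonoid R] (σ : Perm ι) (B : Matrix ι α R) :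
    permuteSlots σ (pureTensor B) = pureTensor (B.submatrix σ.symm id) := by
  ext f
  simpa [permuteSlots, pureTensor] using Equiv.prod_comp σ fun j => B (σ.symm j) (f j)

variable [DecidableEq ι]

def symmetrize [AddCommMonoid R] (F : (ι → α) → R) : (ι → α) → R :=
  ∑ σ : Perm ι, permuteSlots σ F

theorem permuteSlots_symmetrize [AddCommMonoid R] (τ : Perm ι) (F : (ι → α) → R) :
    permuteSlots τ (symmetrize F) = symmetrize F := by
  simp only [symmetrize, permuteSlots_sum, ← permuteSlots_mul]
  exact Fintype.sum_equiv (Equiv.mulLeft τ) _ _ fun σ => rfl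

variable [Fintype α]

theorem permuteSlots_dotProduct_permuteSlots [NonUnitalNonAssocSemiring R] (σ : Perm ι)
    (F G : (ι → α) → R) : permuteSlots σ F ⬝ᵥ permuteSlots σ G = F ⬝ᵥ G :=
  Fintype.sum_equiv (σ.symm.arrowCongr (Equiv.refl α)) _ _ fun _ => rfl

theorem permuteSlots_dotProduct_permuteSlots_eq_inv_mul [NonUnitalNonAssocSemiring R]
    (σ τ : Perm ι) (F : (ι → α) → R) :
    permuteSlots σ F ⬝ᵥ permuteSlots τ F = F ⬝ᵥ permuteSlots (σ⁻¹ * τ) F := by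
  rw [← permuteSlots_dotProduct_permuteSlots σ⁻¹, ← permuteSlots_mul, ← permuteSlots_mul,
    inv_mul_cancel, permuteSlots_one]

theorem pureTensor_dotProduct_pureTensor [CommSemiring R] (B C : Matrix ι α R) :
    pureTensor B ⬝ᵥ pureTensor C = ∏ i, B i ⬝ᵥ C i := by
  simp only [dotProduct, pureTensor, ← prod_mul_distrib]
  exact (Fintype.prod_sum fun i a => B i a * C i a).symm

theorem per_mul_transpose_eq_sum_dotProduct [CommSemiring R] (B : Matrix ι α R) :
    (B * Bᵀ).per = ∑ σ : Perm ι, pureTensor B ⬝ᵥ permuteSlots σ (pureTensor B) := by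
  simp only [permuteSlots_pureTensor, pureTensor_dotProduct_pureTensor]
  exact Fintype.sum_equiv (Equiv.inv (Perm ι)) _ _ fun σ => rfl

theorem symmetrize_dotProduct_self [CommSemiring R] (F : (ι → α) → R) :
    symmetrize F ⬝ᵥ symmetrize F =
      (Fintype.card ι).factorial * ∑ σ : Perm ι, F ⬝ᵥ permuteSlots σ F := by
  calc symmetrize F ⬝ᵥ symmetrize F
      = ∑ σ : Perm ι, ∑ τ : Perm ι, F ⬝ᵥ permuteSlots (σ⁻¹ * τ) F := by
        simp only [symmetrize, sum_dotProduct, dotProduct_sum,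
          permuteSlots_dotProduct_permuteSlots_eq_inv_mul]
        exact Finset.sum_comm
    _ = ∑ _σ : Perm ι, ∑ π : Perm ι, F ⬝ᵥ permuteSlots π F :=
        Finset.sum_congr rfl fun σ _ => Fintype.sum_equiv (Equiv.mulLeft σ⁻¹) _ _ fun τ => rfl
    _ = _ := by rw [sum_const, card_univ, Fintype.card_perm, nsmul_eq_mul]

theorem symmetrize_pureTensor_dotProduct_self [CommSemiring R] (B : Matrix ι α R) :
    symmetrize (pureTensor B) ⬝ᵥ symmetrize (pureTensor B) =
      (Fintype.card ι).factorial * (B * Bᵀ).per := by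
  rw [symmetrize_dotProduct_self, per_mul_transpose_eq_sum_dotProduct]

end Fintype

variable {n : ℕ}

def consTensor [Mul R] (v : α → R) (z : (Fin n → α) → R) : (Fin (n + 1) → α) → R :=
  fun f => v (f 0) * z (Fin.tail f)

theorem consTensor_sum [NonUnitalNonAssocSemiring R] {κ : Type*} (v : α → R)
    (s : Finset κ) (z : κ → (Fin n → α) → R) :
    consTensor v (∑ k ∈ s, z k) = ∑ k ∈ s, consTensor v (z k) := by
  ext f
  simp only [consTensor, Finset.sum_apply, Finset.mul_sum]

theorem pureTensor_fin_succ [CommMonoid R] (B : Matrix (Fin (n + 1)) α R) :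
    pureTensor B = consTensor (B 0) (pureTensor (B.submatrix Fin.succ id)) := by
  ext f
  exact Fin.prod_univ_succ _

theorem permuteSlots_decomposeFin_symm_zero_consTensor [Mul R] (e : Perm (Fin n))
    (v : α → R) (z : (Fin n → α) → R) :
    permuteSlots (Perm.decomposeFin.symm (0, e)) (consTensor v z) =
      consTensor v (permuteSlots e z) := by
  ext f
  simp only [permuteSlots, consTensor, Function.comp_apply, Perm.decomposeFin_symm_apply_zero,
    Fin.tail_def, Perm.decomposeFin_symm_apply_succ, swap_self, refl_apply]
  rfl

theorem symmetrize_consTensor [CommSemiring R] (v : α → R) (z : (Fin n → α) → R) :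
    symmetrize (consTensor v z) = ∑ p, permuteSlots (swap 0 p) (consTensor v (symmetrize z)) := by
  have hcoset : ∀ p, permuteSlots (swap 0 p) (consTensor v (symmetrize z)) =
      ∑ e, permuteSlots (Perm.decomposeFin.symm (p, e)) (consTensor v z) := by
    intro p
    simp only [Perm.decomposeFin_symm_eq_swap_mul p, permuteSlots_mul,
      permuteSlots_decomposeFin_symm_zero_consTensor, ← permuteSlots_sum, ← consTensor_sum]
    rfl
  rw [symmetrize, ← Perm.decomposeFin.symm.sum_comp, Fintype.sum_prod_type]
  simp only [hcoset]

variable [Fintype α]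

theorem consTensor_dotProduct_consTensor [CommSemiring R] (v w : α → R)
    (z u : (Fin n → α) → R) : consTensor v z ⬝ᵥ consTensor w u = (v ⬝ᵥ w) * (z ⬝ᵥ u) := by
  simp only [dotProduct, Fin.sum_pi_cons, consTensor, Fin.cons_zero, Fin.tail_cons,
    Finset.sum_mul_sum]
  exact Finset.sum_congr rfl fun a _ => Finset.sum_congr rfl fun g _ => by ring

theorem consTensor_dotProduct_permuteSlots_swap_succ [CommSemiring R] (v : α → R)
    (z : (Fin (n + 1) → α) → R) (r : Fin (n + 1)) :
    consTensor v z ⬝ᵥ permuteSlots (swap 0 r.succ) (consTensor v z) =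
      ∑ h : Fin n → α, (∑ a, v a * z (r.insertNth a h)) ^ 2 := by
  have hswap : ∀ a b (h : Fin n → α),
      Fin.cons a (r.insertNth b h) ∘ swap 0 r.succ = Fin.cons b (r.insertNth a h) := by
    intro a b h
    ext i
    cases i using Fin.cases with
    | zero => simp
    | succ j =>
      obtain rfl | ⟨k, rfl⟩ := r.eq_self_or_eq_succAbove j
      · simp
      · simp [swap_apply_of_ne_of_ne, Fin.succ_ne_zero, Fin.succAbove_ne r k]
  calc consTensor v z ⬝ᵥ permuteSlots (swap 0 r.succ) (consTensor v z)
      = ∑ a, ∑ b, ∑ h : Fin n → α, v a * z (r.insertNth b h) * (v b * z (r.insertNth a h)) := by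
        rw [dotProduct, Fin.sum_pi_cons]
        refine Finset.sum_congr rfl fun a _ => ?_
        rw [Fin.sum_pi_insertNth r]
        simp only [permuteSlots, hswap, consTensor, Fin.cons_zero, Fin.tail_cons]
    _ = ∑ h : Fin n → α, (∑ a, v a * z (r.insertNth a h)) ^ 2 := by
        simp only [sq, Finset.sum_mul_sum]
        rw [Finset.sum_comm]
        refine (Finset.sum_congr rfl fun b _ => Finset.sum_comm).trans (Finset.sum_comm.trans ?_)
        exact Finset.sum_congr rfl fun h _ => Finset.sum_congr rfl fun b _ =>
          Finset.sum_congr rfl fun a _ => by ring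

variable [CommRing R] [LinearOrder R] [IsStrictOrderedRing R]

theorem consTensor_dotProduct_permuteSlots_swap_nonneg (v : α → R) (z : (Fin n → α) → R)
    (p : Fin (n + 1)) : 0 ≤ consTensor v z ⬝ᵥ permuteSlots (swap 0 p) (consTensor v z) := by
  cases p using Fin.cases with
  | zero =>
    rw [swap_self]
    exact Fintype.sum_nonneg fun _ => mul_self_nonneg _
  | succ r =>
    cases n with
    | zero => exact r.elim0
    | succ n =>
      rw [consTensor_dotProduct_permuteSlots_swap_succ]
      positivity

theorem consTensor_dotProduct_permuteSlots_nonneg (v : α → R) {z : (Fin n → α) → R}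
    (hz : ∀ e, permuteSlots e z = z) (σ : Perm (Fin (n + 1))) :
    0 ≤ consTensor v z ⬝ᵥ permuteSlots σ (consTensor v z) := by
  obtain ⟨⟨p, e⟩, rfl⟩ := Perm.decomposeFin.symm.surjective σ
  rw [Perm.decomposeFin_symm_eq_swap_mul, permuteSlots_mul,
    permuteSlots_decomposeFin_symm_zero_consTensor, hz]
  exact consTensor_dotProduct_permuteSlots_swap_nonneg v z p

end SlotTensor

namespace Matrix

open SlotTensor

variable {α R : Type*} [Fintype α] [CommRing R] [LinearOrder R] [IsStrictOrderedRing R]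

theorem dotProduct_self_mul_per_submatrix_succ_le_per {n : ℕ} (B : Matrix (Fin (n + 1)) α R) :
    (B 0 ⬝ᵥ B 0) * (B.submatrix Fin.succ id * (B.submatrix Fin.succ id)ᵀ).per ≤
      (B * Bᵀ).per := by
  set B' := B.submatrix Fin.succ id
  set y := consTensor (B 0) (symmetrize (pureTensor B'))
  have hy : y ⬝ᵥ y = n.factorial * ((B 0 ⬝ᵥ B 0) * (B' * B'ᵀ).per) := by
    rw [consTensor_dotProduct_consTensor, symmetrize_pureTensor_dotProduct_self,
      Fintype.card_fin]
    ring
  have hexpand : ((n + 1).factorial : R) * (B * Bᵀ).per =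
      ∑ p, ∑ q, permuteSlots (Equiv.swap 0 p) y ⬝ᵥ permuteSlots (Equiv.swap 0 q) y := by
    have h := symmetrize_pureTensor_dotProduct_self B
    rw [Fintype.card_fin] at h
    rw [← h, pureTensor_fin_succ, symmetrize_consTensor, sum_dotProduct]
    simp only [dotProduct_sum]
    rfl
  have hcross : ∀ p q, 0 ≤ permuteSlots (Equiv.swap 0 p) y ⬝ᵥ permuteSlots (Equiv.swap 0 q) y := by
    intro p q
    rw [permuteSlots_dotProduct_permuteSlots_eq_inv_mul]
    exact consTensor_dotProduct_permuteSlots_nonneg _ (permuteSlots_symmetrize · _) _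
  have key : ((n + 1).factorial : R) * ((B 0 ⬝ᵥ B 0) * (B' * B'ᵀ).per) ≤
      (n + 1).factorial * (B * Bᵀ).per := by
    calc ((n + 1).factorial : R) * ((B 0 ⬝ᵥ B 0) * (B' * B'ᵀ).per)
        = ∑ p : Fin (n + 1),
            permuteSlots (Equiv.swap 0 p) y ⬝ᵥ permuteSlots (Equiv.swap 0 p) y := by
          simp only [permuteSlots_dotProduct_permuteSlots, hy, sum_const, card_univ,
            Fintype.card_fin, nsmul_eq_mul, Nat.factorial_succ]
          push_cast
          ring
      _ ≤ ∑ p, ∑ q, permuteSlots (Equiv.swap 0 p) y ⬝ᵥ permuteSlots (Equiv.swap 0 q) y :=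
          sum_le_sum fun p _ => single_le_sum (fun q _ => hcross p q) (mem_univ p)
      _ = _ := hexpand.symm
  exact le_of_mul_le_mul_left key (by positivity)

theorem prod_diag_mul_transpose_le_per :
    ∀ {n : ℕ} (B : Matrix (Fin n) α R), ∏ i, (B * Bᵀ) i i ≤ (B * Bᵀ).per
  | 0, B => by simp [Matrix.per]
  | n + 1, B => by
    rw [Fin.prod_univ_succ]
    calc (B * Bᵀ) 0 0 * ∏ i : Fin n, (B * Bᵀ) i.succ i.succ
        ≤ (B 0 ⬝ᵥ B 0) * (B.submatrix Fin.succ id * (B.submatrix Fin.succ id)ᵀ).per :=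
          mul_le_mul_of_nonneg_left (prod_diag_mul_transpose_le_per _)
            (Fintype.sum_nonneg fun _ => mul_self_nonneg _)
      _ ≤ (B * Bᵀ).per := dotProduct_self_mul_per_submatrix_succ_le_per B

theorem PosSemidef.exists_eq_mul_transpose {ι : Type*} [Fintype ι] {A : Matrix ι ι ℝ}
    (hA : A.PosSemidef) : ∃ B : Matrix ι ι ℝ, A = B * Bᵀ := by
  obtain ⟨X, hX⟩ : ∃ X : Matrix ι ι ℝ, A = star X * X := by
    classical
    open scoped MatrixOrder Matrix.Norms.L2Operator in
    exact CStarAlgebra.nonneg_iff_eq_star_mul_self.mp hA.nonneg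
  refine ⟨Xᵀ, ?_⟩
  rw [hX, transpose_transpose, star_eq_conjTranspose, conjTranspose_eq_transpose_of_trivial]

theorem PosSemidef.prod_diag_le_per {ι : Type*} [Fintype ι] [DecidableEq ι]
    {A : Matrix ι ι ℝ} (hA : A.PosSemidef) : ∏ i, A i i ≤ A.per := by
  let e := (Fintype.equivFin ι).symm
  obtain ⟨B, hB⟩ := (hA.submatrix e).exists_eq_mul_transpose
  calc ∏ i, A i i = ∏ k, A.submatrix e e k k := (e.prod_comp fun i => A i i).symm
    _ ≤ (A.submatrix e e).per := hB ▸ prod_diag_mul_transpose_le_per B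
    _ = A.per := per_submatrix_equiv_s17 A e e

end Matrix

theorem posSemidef_per_properties_general {n : ℕ} (A : Matrix (Fin n) (Fin n) ℝ)
    (hpsd : A.PosSemidef) :
    (∏ i, A i i) ≤ A.per ∧ 0 ≤ ∏ i, A i i ∧
    (∀ i j, A i j ^ 2 ≤ A i i * A j j) ∧
    ∀ S : Finset (Fin n), (principalSub A S).PosSemidef ∧ 0 ≤ (principalSub A S).per := by
  obtain ⟨B, hB⟩ := hpsd.exists_eq_mul_transpose
  have hdiag {ι : Type} [Fintype ι] {M : Matrix ι ι ℝ} (hM : M.PosSemidef) :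
      0 ≤ ∏ i, M i i :=
    prod_nonneg fun _ _ => hM.diag_nonneg
  refine ⟨hpsd.prod_diag_le_per, hdiag hpsd, hB ▸ mul_transpose_apply_sq_le B, fun S => ?_⟩
  have hS : (principalSub A S).PosSemidef := hpsd.submatrix _
  exact ⟨hS, (hdiag hS).trans hS.prod_diag_le_per⟩

/-- Let `A` be a positive semi-definite real symmetric `n × n` matrix.
Then `per(A) ≥ ∏ i, a_{ii} ≥ 0`; moreover `a_{ii} a_{jj} ≥ a_{ij}²` for all `i, j`, and
every principal submatrix `A[S, S]` is positive semi-definite, so `per(A[S, S]) ≥ 0`. -/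
theorem posSemidef_per_properties {n : ℕ} (A : Matrix (Fin n) (Fin n) ℝ)
    (hsym : A.IsSymm) (hpsd : A.PosSemidef) :
    (∏ i, A i i) ≤ A.per ∧ 0 ≤ ∏ i, A i i ∧
    (∀ i j, A i j ^ 2 ≤ A i i * A j j) ∧
    ∀ S : Finset (Fin n), (principalSub A S).PosSemidef ∧ 0 ≤ (principalSub A S).per :=
  posSemidef_per_properties_general A hpsd
end
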